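/- (Theorem 1, admissibility of the halting condition, stated for best-first search over a path space as in Hart–Nilsson–Raphael.) Let V be a type with edge-cost function c : V → V → ℝ≥0∞, let s, t ∈ V, let h : V → ℝ≥0∞ be admissible for t (h(n) ≤ d(n,t) for every n), and let F ⊆ V separate s from t. If P is a walk from s to t whose cost C satisfies C ≤ d(s,n) + h(n) for every n ∈ F (i.e. the cost of the found route is no larger than the minimal frontier value g + h), then C = d(s,t), i.e. the returned route P is an optimal solution. -/

import Mathlib

open scoped ENNReal

/-- A walk from `u` to `v`: a finite nonempty list of vertices starting at `u`
and ending at `v`. -/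
def IsWalk {V : Type} (u v : V) (l : List V) : Prop :=
  l.head? = some u ∧ l.getLast? = some v

/-- Cost of a walk: the sum of the edge costs over consecutive pairs. -/
noncomputable def walkCost {V : Type} (c : V → V → ℝ≥0∞) (l : List V) : ℝ≥0∞ :=
  ((l.zip l.tail).map fun p => c p.1 p.2).sum

/-- `graphDist c u v`: the infimum of the costs of all walks from `u` to `v`. -/
noncomputable def graphDist {V : Type} (c : V → V → ℝ≥0∞) (u v : V) : ℝ≥0∞ :=
  ⨅ (l : List V) (_ : IsWalk u v l), walkCost c l

/-- `F` separates `s` from `t` if every walk from `s` to `t` contains a vertex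
of `F`. -/
def Separates {V : Type} (s t : V) (F : Set V) : Prop :=
  ∀ l : List V, IsWalk s t l → ∃ x ∈ F, x ∈ l

/-- A heuristic `h` is admissible for `t` if `h n ≤ d(n, t)` for every `n`. -/
def Admissible {V : Type} (c : V → V → ℝ≥0∞) (t : V) (h : V → ℝ≥0∞) : Prop :=
  ∀ n : V, h n ≤ graphDist c n t

/-! Every walk from `s` to `t` passes through some `n ∈ F`, so it splits at `n` into a walk
`s ⟶ n`, of cost at least `d(s,n)`, and a walk `n ⟶ t`, of cost at least `d(n,t) ≥ h(n)`.
Its cost is therefore at least `d(s,n) + h(n)`, which by the halting condition is at least the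
cost of `P`; taking the infimum over all walks gives `cost P ≤ d(s,t)`. -/

section Walks

variable {V : Type} (c : V → V → ℝ≥0∞)

lemma walkCost_cons_cons (a b : V) (l : List V) :
    walkCost c (a :: b :: l) = c a b + walkCost c (b :: l) := by
  simp [walkCost]

lemma walkCost_append_cons (a : List V) (x : V) (b : List V) :
    walkCost c (a ++ x :: b) = walkCost c (a ++ [x]) + walkCost c (x :: b) := by
  induction a with
  | nil => simp [walkCost]
  | cons y a ih =>
    cases a with
    | nil => simp [walkCost]
    | cons z a => simp only [List.cons_append, walkCost_cons_cons] at ih ⊢; rw [ih, add_assoc]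

variable {c}

lemma IsWalk.split {u v x : V} {a b : List V} (hl : IsWalk u v (a ++ x :: b)) :
    IsWalk u x (a ++ [x]) ∧ IsWalk x v (x :: b) := by
  refine ⟨⟨?_, by simp⟩, ⟨rfl, ?_⟩⟩
  · cases a <;> simpa using hl.1
  · simpa [List.getLast?_append_of_ne_nil] using hl.2

lemma graphDist_le_walkCost {u v : V} {l : List V} (hl : IsWalk u v l) :
    graphDist c u v ≤ walkCost c l :=
  iInf₂_le l hl

lemma graphDist_add_graphDist_le_walkCost {u v x : V} {l : List V} (hl : IsWalk u v l)
    (hx : x ∈ l) : graphDist c u x + graphDist c x v ≤ walkCost c l := by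
  obtain ⟨a, b, rfl⟩ := List.append_of_mem hx
  obtain ⟨hux, hxv⟩ := hl.split
  rw [walkCost_append_cons]
  exact add_le_add (graphDist_le_walkCost hux) (graphDist_le_walkCost hxv)

end Walks

/-- Theorem 1, admissibility of the halting condition: if `h` is
admissible for `t`, `F` separates `s` from `t`, and `P` is a walk from `s` to
`t` whose cost is no larger than `d(s,n) + h(n)` for every frontier vertex
`n ∈ F`, then the cost of `P` equals `d(s,t)`, i.e. `P` is an optimal route. -/
theorem halting_condition_optimal {V : Type} (c : V → V → ℝ≥0∞) (s t : V)
    (h : V → ℝ≥0∞) (hadm : Admissible c t h) (F : Set V)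
    (hsep : Separates s t F) (P : List V) (hP : IsWalk s t P)
    (hhalt : ∀ n ∈ F, walkCost c P ≤ graphDist c s n + h n) :
    walkCost c P = graphDist c s t := by
  refine le_antisymm (le_iInf₂ fun l hl => ?_) (graphDist_le_walkCost hP)
  obtain ⟨n, hnF, hnl⟩ := hsep l hl
  calc walkCost c P ≤ graphDist c s n + h n := hhalt n hnF
    _ ≤ graphDist c s n + graphDist c n t := add_le_add_right (hadm n) _
    _ ≤ walkCost c l := graphDist_add_graphDist_le_walkCost hl hnl
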